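/- Let G be a loopless cubic graph. The map sending a star labelling π with exponent constantly 2 to the pair (M_π, D⃗_π) — where M_π := {e = uv ∈ E(G) : π_u(e) = π_v(e) = 1} and D⃗_π is the orientation of D_π := E(G) − M_π in which each edge e = uv ∈ D_π is oriented from u to v exactly when π_u(e) = 0 and π_v(e) = 2 — is a bijection from the set of star labellings of G with exponent constantly 2 onto the set of pairs (M, D⃗) where M is a perfect matching of G and D⃗ is an orientation of the 2-factor E(G) − M in which every vertex has in-degree 1 and out-degree 1. -/

import Mathlib

namespace FLL

variable {V E : Type}

/-- The flags of a multigraph: incident (vertex, edge) pairs. -/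
def Flag (ends : E → Sym2 V) : Type := {p : V × E // p.1 ∈ ends p.2}

instance (ends : E → Sym2 V) [Fintype V] [Fintype E] [DecidableEq V] :
    Fintype (Flag ends) := Subtype.fintype _

/-- Degree of a vertex: number of incident edges. -/
def deg [Fintype E] [DecidableEq V] (ends : E → Sym2 V) (v : V) : ℕ :=
  (Finset.univ.filter fun e => v ∈ ends e).card

/-- A multigraph is loopless if no edge joins a vertex to itself. -/
def Loopless (ends : E → Sym2 V) : Prop := ∀ e, ¬ (ends e).IsDiag

/-- Reachability avoiding a set `X` of edges. -/
def ReachAvoiding (ends : E → Sym2 V) (X : Set E) : V → V → Prop :=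
  Relation.ReflTransGen (fun u v => ∃ e, e ∉ X ∧ ends e = s(u, v))

/-- A cut-edge: its removal disconnects its two endpoints. -/
def IsCutEdge (ends : E → Sym2 V) (e : E) : Prop :=
  ∀ u v : V, ends e = s(u, v) → ¬ ReachAvoiding ends {e} u v

variable [Fintype V] [DecidableEq V] [Fintype E] [DecidableEq E]

/-- A star labelling of `G`: at each vertex `v`, the labels of the flags at `v`
form a bijection onto `{0, 1, …, deg v - 1}`. -/
def IsStarLabelling (ends : E → Sym2 V) (π : Flag ends → ℕ) : Prop :=
  ∀ v : V, (Finset.univ.filter (fun fl : Flag ends => fl.1.1 = v)).image π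
      = Finset.range (deg ends v)

/-- The exponent of a star labelling: `w_π(e) = π_u(e) + π_v(e)` for `e = uv`
(the sum of the labels of the two flags of `e`). -/
def exponent (ends : E → Sym2 V) (π : Flag ends → ℕ) : E → ℕ :=
  fun e => ∑ fl ∈ Finset.univ.filter (fun fl : Flag ends => fl.1.2 = e), π fl

/-- `M_π`: the set of edges both of whose flags receive label `1` under `π`. -/
def Mpi (ends : E → Sym2 V) (π : Flag ends → ℕ) : Set E :=
  {e | ∀ fl : Flag ends, fl.1.2 = e → π fl = 1}

end FLL

open FLL

section StarAux

variable {V E : Type} [Fintype V] [DecidableEq V] [Fintype E] [DecidableEq E]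

instance instDecEqFlag (ends : E → Sym2 V) : DecidableEq (Flag ends) :=
  inferInstanceAs (DecidableEq {p : V × E // p.1 ∈ ends p.2})

lemma flagsAt_card (ends : E → Sym2 V) (v : V) :
    (Finset.univ.filter fun fl : Flag ends => fl.1.1 = v).card = deg ends v := by
  rw [deg]
  apply Finset.card_bij (fun fl _ => fl.1.2)
  · intro fl hfl
    simp only [Finset.mem_filter] at hfl ⊢
    exact ⟨Finset.mem_univ _, hfl.2 ▸ fl.2⟩
  · intro a ha b hb hab
    simp only [Finset.mem_filter] at ha hb
    exact Subtype.ext (Prod.ext (ha.2.trans hb.2.symm) hab)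
  · intro e he
    simp only [Finset.mem_filter] at he
    exact ⟨⟨(v,e), he.2⟩, Finset.mem_filter.mpr ⟨Finset.mem_univ _, rfl⟩, rfl⟩

variable {ends : E → Sym2 V} {π : Flag ends → ℕ}

lemma star_injOn (hπ : IsStarLabelling ends π) (v : V) :
    Set.InjOn π (Finset.univ.filter fun fl : Flag ends => fl.1.1 = v) := by
  apply Finset.card_image_iff.mp
  rw [hπ v, Finset.card_range, flagsAt_card]

lemma star_exists (hπ : IsStarLabelling ends π) (v : V) {i : ℕ} (hi : i < deg ends v) :
    ∃ fl : Flag ends, fl.1.1 = v ∧ π fl = i := by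
  have : i ∈ Finset.range (deg ends v) := Finset.mem_range.mpr hi
  rw [← hπ v] at this
  obtain ⟨fl, hfl, h⟩ := Finset.mem_image.mp this
  exact ⟨fl, (Finset.mem_filter.mp hfl).2, h⟩

lemma star_unique (hπ : IsStarLabelling ends π) {fl fl' : Flag ends}
    (h1 : fl.1.1 = fl'.1.1) (h2 : π fl = π fl') : fl = fl' :=
  star_injOn hπ fl'.1.1 (by simp [h1]) (by simp) h2

omit [Fintype V] [DecidableEq V] [Fintype E] [DecidableEq E] in
lemma ends_eq (hloop : Loopless ends) (e : E) :
    ∃ u w : V, u ≠ w ∧ ends e = s(u, w) := by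
  obtain ⟨⟨u,w⟩, h⟩ := (ends e).exists_rep
  refine ⟨u, w, ?_, h.symm⟩
  intro huw
  exact hloop e (by rw [← h, huw]; exact Sym2.mk_isDiag_iff.mpr rfl)

omit [Fintype V] [DecidableEq V] [Fintype E] [DecidableEq E] in
lemma flag_of_edge {e : E} {u w : V} (huw : ends e = s(u, w)) {fl : Flag ends}
    (hfl : fl.1.2 = e) :
    fl = ⟨(u, e), huw ▸ Sym2.mem_mk_left u w⟩ ∨
    fl = ⟨(w, e), huw ▸ Sym2.mem_mk_right u w⟩ := by
  have := fl.2
  rw [hfl, huw, Sym2.mem_iff] at this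
  rcases this with h | h
  · exact Or.inl (Subtype.ext (Prod.ext h hfl))
  · exact Or.inr (Subtype.ext (Prod.ext h hfl))

lemma exponent_eq {e : E} {u w : V} (huw : u ≠ w) (hends : ends e = s(u, w)) :
    exponent ends π e = π ⟨(u, e), hends ▸ Sym2.mem_mk_left u w⟩
      + π ⟨(w, e), hends ▸ Sym2.mem_mk_right u w⟩ := by
  rw [exponent]
  have hset : (Finset.univ.filter fun fl : Flag ends => fl.1.2 = e) =
      {⟨(u, e), hends ▸ Sym2.mem_mk_left u w⟩, ⟨(w, e), hends ▸ Sym2.mem_mk_right u w⟩} := by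
    ext fl
    simp only [Finset.mem_filter, Finset.mem_univ, true_and, Finset.mem_insert,
      Finset.mem_singleton]
    constructor
    · intro h
      rcases flag_of_edge hends h with h | h
      · exact Finset.mem_insert.mpr (Or.inl h)
      · exact Finset.mem_insert.mpr (Or.inr (Finset.mem_singleton.mpr h))
    · intro h
      obtain rfl | h := Finset.mem_insert.mp h
      · rfl
      · obtain rfl := Finset.mem_singleton.mp h
        rfl
  rw [hset]
  exact Finset.sum_pair (by intro h; exact huw (congrArg (fun fl : Flag ends => fl.1.1) h))

omit [Fintype V] [DecidableEq V] [Fintype E] [DecidableEq E] in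
lemma sym2_eq_of_mem {s : Sym2 V} (hdiag : ¬ s.IsDiag) {a b : V}
    (ha : a ∈ s) (hb : b ∈ s) (hab : a ≠ b) : s = s(a, b) := by
  obtain ⟨⟨u,w⟩, rfl⟩ := s.exists_rep
  rw [Sym2.mem_iff] at ha hb
  rcases ha with rfl | rfl <;> rcases hb with rfl | rfl <;>
    first | rfl | exact absurd rfl hab | exact Sym2.eq_swap

lemma mpi_of_flag (hloop : Loopless ends) (hexp : ∀ e, exponent ends π e = 2)
    {e : E} {v : V} (hv : v ∈ ends e) (h1 : π ⟨(v, e), hv⟩ = 1) : e ∈ Mpi ends π := by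
  obtain ⟨u, w, huw, hends⟩ := ends_eq hloop e
  have hE := hexp e
  rw [exponent_eq huw hends] at hE
  have hv' := flag_of_edge hends (fl := ⟨(v, e), hv⟩) rfl
  intro fl hfl
  rcases flag_of_edge hends hfl with rfl | rfl <;>
    rcases hv' with heq | heq <;> rw [heq] at h1 <;> omega

end StarAux


/-- For a loopless cubic graph `G`, the map `π ↦ (M_π, D⃗_π)` — where
`M_π = {e = uv : π_u(e) = π_v(e) = 1}` and each edge `e = uv ∉ M_π` is oriented from `u`
to `v` exactly when `π_u(e) = 0` and `π_v(e) = 2` — is a bijection from the star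
labellings of `G` with exponent constantly `2` onto the pairs `(M, D⃗)` consisting of a
perfect matching `M` of `G` together with an orientation of the complementary 2-factor
in which every vertex has in-degree `1` and out-degree `1`.  (The bijection is expressed
by: every such `π` induces a valid pair, and every valid pair is induced by exactly one
such `π`.) -/
theorem statement12 (V E : Type) [Fintype V] [DecidableEq V] [Fintype E] [DecidableEq E]
    (ends : E → Sym2 V) (hloop : Loopless ends) (hcubic : ∀ v, deg ends v = 3) :
    -- the map is well defined: each star labelling with exponent `𝟐` yields a
    -- perfect matching `M_π` and an orientation of the complement (head = the end
    -- labelled 2, tail = the end labelled 0) with in- and out-degree 1 everywhere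
    (∀ π : Flag ends → ℕ, IsStarLabelling ends π → (∀ e, exponent ends π e = 2) →
      ((∀ e ∈ Mpi ends π, ∀ e' ∈ Mpi ends π, e ≠ e' → ∀ v : V, v ∈ ends e → v ∉ ends e') ∧
       (∀ v : V, ∃ e ∈ Mpi ends π, v ∈ ends e) ∧
       (∀ v : V, {e : E | e ∉ Mpi ends π ∧
          ∃ h : v ∈ ends e, π ⟨(v, e), h⟩ = 2}.ncard = 1) ∧
       (∀ v : V, {e : E | e ∉ Mpi ends π ∧
          ∃ h : v ∈ ends e, π ⟨(v, e), h⟩ = 0}.ncard = 1))) ∧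
    -- and it is bijective: every pair (M, D⃗) consisting of a perfect matching and an
    -- orientation of the complementary 2-factor with in/out-degree 1 at every vertex
    -- is induced by exactly one star labelling with exponent `𝟐`
    (∀ (M : Set E) (hd : (e : E) → e ∉ M → V),
      (∀ e ∈ M, ∀ e' ∈ M, e ≠ e' → ∀ v : V, v ∈ ends e → v ∉ ends e') →
      (∀ v : V, ∃ e ∈ M, v ∈ ends e) →
      (∀ (e : E) (h : e ∉ M), hd e h ∈ ends e) →
      (∀ v : V, {e : E | ∃ h : e ∉ M, hd e h = v}.ncard = 1) →
      (∀ v : V, {e : E | v ∈ ends e ∧ ∃ h : e ∉ M, hd e h ≠ v}.ncard = 1) →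
      ∃! π : {π : Flag ends → ℕ //
          IsStarLabelling ends π ∧ ∀ e, exponent ends π e = 2},
        Mpi ends π.1 = M ∧
        ∀ (e : E) (h : e ∉ M) (hv : hd e h ∈ ends e), π.1 ⟨(hd e h, e), hv⟩ = 2) := by
  constructor
  · -- well definedness
    intro π hπ hexp
    refine ⟨?_, ?_, ?_, ?_⟩
    · intro e he e' he' hne v hv hv'
      exact hne (congrArg (fun fl : Flag ends => fl.1.2)
        (star_unique hπ (fl := ⟨(v, e), hv⟩) (fl' := ⟨(v, e'), hv'⟩) rfl
          ((he ⟨(v, e), hv⟩ rfl).trans (he' ⟨(v, e'), hv'⟩ rfl).symm)))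
    · intro v
      obtain ⟨fl, hfl1, hfl2⟩ := star_exists hπ v (i := 1) (by rw [hcubic]; omega)
      subst hfl1
      exact ⟨fl.1.2, mpi_of_flag hloop hexp fl.2 hfl2, fl.2⟩
    · intro v
      obtain ⟨fl, hfl1, hfl2⟩ := star_exists hπ v (i := 2) (by rw [hcubic]; omega)
      subst hfl1
      rw [Set.ncard_eq_one]
      refine ⟨fl.1.2, Set.eq_singleton_iff_unique_mem.mpr ⟨⟨?_, fl.2, hfl2⟩, ?_⟩⟩
      · intro hM
        have := hM fl rfl
        omega
      · rintro e ⟨heM, hv, h2⟩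
        exact congrArg (fun fl : Flag ends => fl.1.2)
          (star_unique hπ (fl := ⟨(fl.1.1, e), hv⟩) (fl' := fl) rfl (h2.trans hfl2.symm))
    · intro v
      obtain ⟨fl, hfl1, hfl2⟩ := star_exists hπ v (i := 0) (by rw [hcubic]; omega)
      subst hfl1
      rw [Set.ncard_eq_one]
      refine ⟨fl.1.2, Set.eq_singleton_iff_unique_mem.mpr ⟨⟨?_, fl.2, hfl2⟩, ?_⟩⟩
      · intro hM
        have := hM fl rfl
        omega
      · rintro e ⟨heM, hv, h0⟩
        exact congrArg (fun fl : Flag ends => fl.1.2)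
          (star_unique hπ (fl := ⟨(fl.1.1, e), hv⟩) (fl' := fl) rfl (h0.trans hfl2.symm))
  · -- bijectivity
    intro M hd hM hcov hhd hin hout
    classical
    have hsingle : ∀ (S : Set E), S.ncard = 1 → ∃ e ∈ S, ∀ e' ∈ S, e' = e := by
      intro S hS
      obtain ⟨a, rfl⟩ := Set.ncard_eq_one.mp hS
      exact ⟨a, rfl, fun e' he' => he'⟩
    have hcovU : ∀ v : V, ∃ e, (e ∈ M ∧ v ∈ ends e) ∧
        ∀ e', e' ∈ M → v ∈ ends e' → e' = e := by
      intro v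
      obtain ⟨e, heM, hev⟩ := hcov v
      refine ⟨e, ⟨heM, hev⟩, fun e' he'M he'v => ?_⟩
      by_contra hne
      exact hM e' he'M e heM hne v he'v hev
    set π0 : Flag ends → ℕ := fun fl =>
      if h : fl.1.2 ∈ M then 1 else if hd fl.1.2 h = fl.1.1 then 2 else 0 with hπ0
    have hval1 : ∀ fl : Flag ends, fl.1.2 ∈ M → π0 fl = 1 := fun fl h => dif_pos h
    have hval2 : ∀ (fl : Flag ends) (h : fl.1.2 ∉ M), hd fl.1.2 h = fl.1.1 → π0 fl = 2 := by
      intro fl h hh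
      show (if h : fl.1.2 ∈ M then 1 else if hd fl.1.2 h = fl.1.1 then 2 else 0) = 2
      rw [dif_neg h, if_pos hh]
    have hval0 : ∀ (fl : Flag ends) (h : fl.1.2 ∉ M), hd fl.1.2 h ≠ fl.1.1 → π0 fl = 0 := by
      intro fl h hh
      show (if h : fl.1.2 ∈ M then 1 else if hd fl.1.2 h = fl.1.1 then 2 else 0) = 0
      rw [dif_neg h, if_neg hh]
    have hstar : IsStarLabelling ends π0 := by
      intro v
      obtain ⟨em, hem, hemU⟩ := hcovU v
      obtain ⟨ei, hei, heiU⟩ := hsingle _ (hin v)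
      obtain ⟨eo, heo, heoU⟩ := hsingle _ (hout v)
      obtain ⟨hiM, hieq⟩ := hei
      obtain ⟨heov, hoM, honeq⟩ := heo
      have heiv : v ∈ ends ei := hieq ▸ hhd ei hiM
      have hfilter : (Finset.univ.filter fun fl : Flag ends => fl.1.1 = v) =
          {⟨(v, em), hem.2⟩, ⟨(v, ei), heiv⟩, ⟨(v, eo), heov⟩} := by
        ext fl
        simp only [Finset.mem_filter, Finset.mem_univ, true_and, Finset.mem_insert,
          Finset.mem_singleton]
        constructor
        · intro hfl
          by_cases hMe : fl.1.2 ∈ M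
          · exact Finset.mem_insert.mpr (Or.inl (Subtype.ext (Prod.ext hfl (hemU fl.1.2 hMe (hfl ▸ fl.2)))))
          · by_cases hh : hd fl.1.2 hMe = fl.1.1
            · exact Finset.mem_insert.mpr (Or.inr (Finset.mem_insert.mpr (Or.inl (Subtype.ext (Prod.ext hfl
                (heiU fl.1.2 ⟨hMe, hh.trans hfl⟩))))))
            · exact Finset.mem_insert.mpr (Or.inr (Finset.mem_insert.mpr (Or.inr
                (Finset.mem_singleton.mpr (Subtype.ext (Prod.ext hfl
                (heoU fl.1.2 ⟨hfl ▸ fl.2, hMe, fun heq => hh (heq.trans hfl.symm)⟩)))))))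
        · intro h
          obtain rfl | h := Finset.mem_insert.mp h
          · rfl
          obtain rfl | h := Finset.mem_insert.mp h
          · rfl
          obtain rfl := Finset.mem_singleton.mp h
          rfl
      rw [hfilter, Finset.image_insert π0 ⟨(v, em), hem.2⟩, Finset.image_insert π0 ⟨(v, ei), heiv⟩,
        Finset.image_singleton π0 ⟨(v, eo), heov⟩,
        hval1 ⟨(v, em), hem.2⟩ hem.1, hval2 ⟨(v, ei), heiv⟩ hiM hieq, hval0 ⟨(v, eo), heov⟩ hoM honeq,
        hcubic]
      ext n
      simp only [Finset.mem_insert, Finset.mem_singleton, Finset.mem_range]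
      omega
    have hexp0 : ∀ e, exponent ends π0 e = 2 := by
      intro e
      obtain ⟨u, w, huw, hends⟩ := ends_eq hloop e
      rw [exponent_eq huw hends]
      by_cases hMe : e ∈ M
      · rw [hval1 ⟨(u, e), hends ▸ Sym2.mem_mk_left u w⟩ hMe,
          hval1 ⟨(w, e), hends ▸ Sym2.mem_mk_right u w⟩ hMe]
      · have hmem := hhd e hMe
        rw [hends, Sym2.mem_iff] at hmem
        rcases hmem with h | h
        · rw [hval2 ⟨(u, e), hends ▸ Sym2.mem_mk_left u w⟩ hMe h,
            hval0 ⟨(w, e), hends ▸ Sym2.mem_mk_right u w⟩ hMe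
              (fun hw => huw (h.symm.trans hw))]
        · rw [hval0 ⟨(u, e), hends ▸ Sym2.mem_mk_left u w⟩ hMe
              (fun hu => huw (hu.symm.trans h)),
            hval2 ⟨(w, e), hends ▸ Sym2.mem_mk_right u w⟩ hMe h]
    have hMpi : Mpi ends π0 = M := by
      ext e
      constructor
      · intro he
        by_contra hMe
        have h1 := he ⟨(hd e hMe, e), hhd e hMe⟩ rfl
        have h2 := hval2 ⟨(hd e hMe, e), hhd e hMe⟩ hMe rfl
        omega
      · intro hMe fl hfl
        exact hval1 fl (by rw [hfl]; exact hMe)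
    refine ⟨⟨π0, hstar, hexp0⟩, ⟨hMpi, fun e h hv => hval2 ⟨(hd e h, e), hv⟩ h rfl⟩, ?_⟩
    rintro ⟨π', hπ', hexp'⟩ ⟨hMpi', hhead'⟩
    apply Subtype.ext
    funext fl
    show π' fl = π0 fl
    by_cases hMe : fl.1.2 ∈ M
    · rw [hval1 fl hMe]
      have hm : fl.1.2 ∈ Mpi ends π' := by rw [hMpi']; exact hMe
      exact hm fl rfl
    · by_cases hh : hd fl.1.2 hMe = fl.1.1
      · rw [hval2 fl hMe hh]
        have h2 := hhead' fl.1.2 hMe (hhd _ hMe)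
        have hfe : (⟨(hd fl.1.2 hMe, fl.1.2), hhd _ hMe⟩ : Flag ends) = fl :=
          Subtype.ext (Prod.ext hh rfl)
        rw [hfe] at h2
        exact h2
      · rw [hval0 fl hMe hh]
        have hends : ends fl.1.2 = s(hd fl.1.2 hMe, fl.1.1) :=
          sym2_eq_of_mem (hloop _) (hhd _ hMe) fl.2 hh
        have hE := hexp' fl.1.2
        rw [exponent_eq hh hends] at hE
        have h2 := hhead' fl.1.2 hMe (hends ▸ Sym2.mem_mk_left (hd fl.1.2 hMe) fl.1.1)
        have hfl2 : (⟨(fl.1.1, fl.1.2),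
            hends ▸ Sym2.mem_mk_right (hd fl.1.2 hMe) fl.1.1⟩ : Flag ends) = fl :=
          Subtype.ext rfl
        rw [hfl2] at hE
        have hE' : π' ⟨(hd fl.1.2 hMe, fl.1.2), hhd _ hMe⟩ + π' fl = 2 := hE
        have h2' : π' ⟨(hd fl.1.2 hMe, fl.1.2), hhd _ hMe⟩ = 2 := h2
        omega
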